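/- arXiv:2403.18900 — 2 statements merged into one kernel-verified Lean document; each statement's English description precedes it below -/
import Mathlib

section
/- The stabilizer nullity is additive under tensor products: for unit vectors $\ket{\psi} \in (\mathbb{C}^2)^{\otimes n}$ and $\ket{\phi} \in (\mathbb{C}^2)^{\otimes m}$, one has $|\mathrm{Stab}(\ket{\psi} \otimes \ket{\phi})| = |\mathrm{Stab}(\ket{\psi})| \cdot |\mathrm{Stab}(\ket{\phi})|$, hence $\nu(\ket{\psi} \otimes \ket{\phi}) = \nu(\ket{\psi}) + \nu(\ket{\phi})$. -/
open Matrix Complex Kronecker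

noncomputable section

def Xm : Matrix (Fin 2) (Fin 2) ℂ := !![0,1;1,0]
def Zm : Matrix (Fin 2) (Fin 2) ℂ := !![1,0;0,-1]

/-- Tensor product of single-qubit Paulis `X^(b i) * Z^(c i)` over the qubit index set `ι`. -/
def pauliString {ι : Type} [Fintype ι] [DecidableEq ι] (b c : ι → Fin 2) :
    Matrix (ι → Fin 2) (ι → Fin 2) ℂ :=
  Matrix.of fun x y => ∏ i, ((Xm ^ (b i : ℕ)) * (Zm ^ (c i : ℕ))) (x i) (y i)

/-- The Pauli group on qubits indexed by `ι`: phases `±1, ±i` times Pauli strings. -/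
def PauliGroup (ι : Type) [Fintype ι] [DecidableEq ι] : Set (Matrix (ι → Fin 2) (ι → Fin 2) ℂ) :=
  { P | ∃ ω : ℂ, ω ∈ ({1, -1, Complex.I, -Complex.I} : Set ℂ) ∧
      ∃ b c : ι → Fin 2, P = ω • pauliString b c }

/-- The stabilizer group of a state `ψ`. -/
def Stab {ι : Type} [Fintype ι] [DecidableEq ι] (ψ : (ι → Fin 2) → ℂ) :
    Set (Matrix (ι → Fin 2) (ι → Fin 2) ℂ) :=
  { P | P ∈ PauliGroup ι ∧ P.mulVec ψ = ψ }


/-- The tensor product of states on qubit sets `Fin n` and `Fin m`, as a state on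
qubits indexed by `Fin n ⊕ Fin m`. -/
def tensorState {n m : ℕ} (ψ : (Fin n → Fin 2) → ℂ) (φ : (Fin m → Fin 2) → ℂ) :
    ((Fin n ⊕ Fin m) → Fin 2) → ℂ :=
  fun x => ψ (fun i => x (Sum.inl i)) * φ (fun j => x (Sum.inr j))

/-! If the Pauli operator `ω • (S₁ ⊗ S₂)` fixes `ψ ⊗ φ`, comparing coefficients shows that
`S₁ ψ = c ψ` and `S₂ φ = d φ` with `ω c d = 1`. Since Pauli strings square to `±1`, the eigenvalues
`c, d` are fourth roots of unity, so `c⁻¹ S₁` and `d⁻¹ S₂` are Pauli operators stabilizing `ψ` and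
`φ`. Hence `(P, Q) ↦ P ⊗ Q` maps `Stab ψ × Stab φ` onto `Stab (ψ ⊗ φ)`, and it is injective because
`P` and `Q` can be read off `P ⊗ Q` once `Q φ = φ ≠ 0` (resp. `P ψ = ψ ≠ 0`) is known. -/

section PiKronecker

variable {ι α R : Type*} [Fintype ι] [CommSemiring R]

def piKronecker (A : ι → Matrix α α R) : Matrix (ι → α) (ι → α) R :=
  of fun x y => ∏ i, A i (x i) (y i)

theorem piKronecker_mul [Fintype α] [DecidableEq ι] (A B : ι → Matrix α α R) :
    piKronecker A * piKronecker B = piKronecker (A * B) := by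
  ext x y
  simp only [piKronecker, mul_apply, of_apply, Pi.mul_apply, Fintype.prod_sum,
    Finset.prod_mul_distrib]

theorem piKronecker_smul_one [DecidableEq α] (d : ι → R) :
    piKronecker (fun i => d i • (1 : Matrix α α R)) = (∏ i, d i) • 1 := by
  ext x y
  simp only [piKronecker, of_apply, Matrix.smul_apply, one_apply, smul_eq_mul, mul_ite, mul_one,
    mul_zero, Finset.prod_ite_zero, funext_iff, Finset.mem_univ, true_implies]

end PiKronecker

section Pauli

variable {ι : Type} [Fintype ι] [DecidableEq ι]

theorem mem_phases_iff_pow_four_eq_one (ω : ℂ) :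
    ω ∈ ({1, -1, I, -I} : Set ℂ) ↔ ω ^ 4 = 1 := by
  have hfactor : ω ^ 4 - 1 = (ω - 1) * (ω + 1) * (ω - I) * (ω + I) := by
    linear_combination (ω ^ 2 - 1) * I_sq
  rw [← sub_eq_zero, hfactor]
  simp only [mul_eq_zero, sub_eq_zero, add_eq_zero_iff_eq_neg, Set.mem_insert_iff,
    Set.mem_singleton_iff, or_assoc]

theorem smul_pauliString_mem_pauliGroup {ω : ℂ} (hω : ω ^ 4 = 1) (b c : ι → Fin 2) :
    ω • pauliString b c ∈ PauliGroup ι :=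
  ⟨ω, (mem_phases_iff_pow_four_eq_one ω).2 hω, b, c, rfl⟩

theorem pauliGroup_finite : (PauliGroup ι).Finite := by
  refine ((Set.toFinite ({1, -1, I, -I} : Set ℂ)).prod Set.finite_univ).image
    (fun p : ℂ × (ι → Fin 2) × (ι → Fin 2) => p.1 • pauliString p.2.1 p.2.2) |>.subset ?_
  rintro P ⟨ω, hω, b, c, rfl⟩
  exact ⟨(ω, b, c), ⟨hω, trivial⟩, rfl⟩

theorem pauliString_eq_piKronecker (b c : ι → Fin 2) :
    pauliString b c = piKronecker fun i => Xm ^ (b i : ℕ) * Zm ^ (c i : ℕ) :=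
  rfl

theorem pauliString_zero : pauliString (0 : ι → Fin 2) 0 = 1 := by
  simpa [pauliString_eq_piKronecker] using
    piKronecker_smul_one (ι := ι) (α := Fin 2) (fun _ => (1 : ℂ))

theorem Xm_pow_mul_Zm_pow_mul_self (b c : Fin 2) :
    Xm ^ (b : ℕ) * Zm ^ (c : ℕ) * (Xm ^ (b : ℕ) * Zm ^ (c : ℕ)) = (-1 : ℂ) ^ (b * c : ℕ) • 1 := by
  fin_cases b <;> fin_cases c <;> ext i j <;> fin_cases i <;> fin_cases j <;>
    simp [Xm, Zm, mul_apply, Fin.sum_univ_two]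

theorem pauliString_mul_self (b c : ι → Fin 2) :
    pauliString b c * pauliString b c = (∏ i, (-1 : ℂ) ^ (b i * c i : ℕ)) • 1 := by
  rw [pauliString_eq_piKronecker, piKronecker_mul, ← piKronecker_smul_one]
  exact congrArg piKronecker (funext fun i => Xm_pow_mul_Zm_pow_mul_self (b i) (c i))

theorem pow_four_eq_one_of_pauliString_mulVec_eq_smul {b c : ι → Fin 2} {χ : (ι → Fin 2) → ℂ}
    {e : ℂ} (hχ : χ ≠ 0) (he : pauliString b c *ᵥ χ = e • χ) : e ^ 4 = 1 := by
  have hsq : e ^ 2 = ∏ i, (-1 : ℂ) ^ (b i * c i : ℕ) := by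
    refine smul_left_injective ℂ hχ ?_
    calc e ^ 2 • χ = pauliString b c *ᵥ (pauliString b c *ᵥ χ) := by
          rw [he, mulVec_smul, he, smul_smul, sq]
      _ = _ := by rw [mulVec_mulVec, pauliString_mul_self, smul_mulVec, one_mulVec]
  rw [show e ^ 4 = (e ^ 2) ^ 2 by ring, hsq, ← Finset.prod_pow]
  exact Finset.prod_eq_one fun i _ => by rw [← pow_mul, pow_mul', neg_one_sq, one_pow]

theorem one_mem_stab (ψ : (ι → Fin 2) → ℂ) : 1 ∈ Stab ψ :=
  ⟨⟨1, by simp, 0, 0, by rw [pauliString_zero, one_smul]⟩, one_mulVec ψ⟩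

theorem ncard_stab_pos (ψ : (ι → Fin 2) → ℂ) : 0 < (Stab ψ).ncard :=
  (Set.ncard_pos (pauliGroup_finite.subset fun _ hP => hP.1)).2 ⟨1, one_mem_stab ψ⟩

end Pauli

section Tensor

variable {ι κ : Type}

def tensorMat (P : Matrix (ι → Fin 2) (ι → Fin 2) ℂ) (Q : Matrix (κ → Fin 2) (κ → Fin 2) ℂ) :
    Matrix (ι ⊕ κ → Fin 2) (ι ⊕ κ → Fin 2) ℂ :=
  of fun x y => P (fun i => x (.inl i)) (fun i => y (.inl i)) *
    Q (fun j => x (.inr j)) (fun j => y (.inr j))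

theorem tensorMat_smul_smul (a b : ℂ) (P : Matrix (ι → Fin 2) (ι → Fin 2) ℂ)
    (Q : Matrix (κ → Fin 2) (κ → Fin 2) ℂ) :
    tensorMat (a • P) (b • Q) = (a * b) • tensorMat P Q := by
  ext x y
  simp only [tensorMat, of_apply, Matrix.smul_apply, smul_eq_mul]
  ring

theorem pauliString_sum_eq_tensorMat [Fintype ι] [DecidableEq ι] [Fintype κ] [DecidableEq κ]
    (b c : ι ⊕ κ → Fin 2) :
    pauliString b c = tensorMat (pauliString (fun i => b (.inl i)) (fun i => c (.inl i)))
      (pauliString (fun j => b (.inr j)) (fun j => c (.inr j))) := by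
  ext x y
  simp only [pauliString, tensorMat, of_apply, Fintype.prod_sum_type]

theorem mul_apply_eq_of_tensorMat_eq (P P' : Matrix (ι → Fin 2) (ι → Fin 2) ℂ)
    (Q Q' : Matrix (κ → Fin 2) (κ → Fin 2) ℂ) (h : tensorMat P Q = tensorMat P' Q')
    (a a' : ι → Fin 2) (b b' : κ → Fin 2) :
    P a a' * Q b b' = P' a a' * Q' b b' :=
  congrFun (congrFun h (Sum.elim a b)) (Sum.elim a' b')

theorem left_eq_of_tensorMat_eq [Fintype κ] [DecidableEq κ]
    {P P' : Matrix (ι → Fin 2) (ι → Fin 2) ℂ}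
    {Q Q' : Matrix (κ → Fin 2) (κ → Fin 2) ℂ} {φ : (κ → Fin 2) → ℂ} (hφ : φ ≠ 0)
    (hQ : Q *ᵥ φ = φ) (hQ' : Q' *ᵥ φ = φ) (h : tensorMat P Q = tensorMat P' Q') : P = P' := by
  obtain ⟨b, hb⟩ := Function.ne_iff.1 hφ
  ext a a'
  refine mul_right_cancel₀ hb ?_
  calc P a a' * φ b = P a a' * (Q *ᵥ φ) b := by rw [hQ]
    _ = ∑ b', P a a' * Q b b' * φ b' := by
        simp only [mulVec, dotProduct, Finset.mul_sum, mul_assoc]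
    _ = ∑ b', P' a a' * Q' b b' * φ b' := by
        simp only [mul_apply_eq_of_tensorMat_eq P P' Q Q' h]
    _ = P' a a' * (Q' *ᵥ φ) b := by
        simp only [mulVec, dotProduct, Finset.mul_sum, mul_assoc]
    _ = P' a a' * φ b := by rw [hQ']

theorem right_eq_of_tensorMat_eq [Fintype ι] [DecidableEq ι]
    {P P' : Matrix (ι → Fin 2) (ι → Fin 2) ℂ}
    {Q Q' : Matrix (κ → Fin 2) (κ → Fin 2) ℂ} {ψ : (ι → Fin 2) → ℂ} (hψ : ψ ≠ 0)
    (hP : P *ᵥ ψ = ψ) (hP' : P' *ᵥ ψ = ψ) (h : tensorMat P Q = tensorMat P' Q') : Q = Q' := by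
  obtain ⟨a, ha⟩ := Function.ne_iff.1 hψ
  ext b b'
  refine mul_left_cancel₀ ha ?_
  calc ψ a * Q b b' = (P *ᵥ ψ) a * Q b b' := by rw [hP]
    _ = ∑ a', P a a' * Q b b' * ψ a' := by
        simp only [mulVec, dotProduct, Finset.sum_mul, mul_right_comm]
    _ = ∑ a', P' a a' * Q' b b' * ψ a' := by
        simp only [mul_apply_eq_of_tensorMat_eq P P' Q Q' h]
    _ = (P' *ᵥ ψ) a * Q' b b' := by
        simp only [mulVec, dotProduct, Finset.sum_mul, mul_right_comm]
    _ = ψ a * Q' b b' := by rw [hP']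

end Tensor

theorem exists_eq_smul_of_mul_outer_eq {α β : Type*} {u ψ : α → ℂ} {v φ : β → ℂ} {ω : ℂ}
    (hψ : ψ ≠ 0) (hφ : φ ≠ 0) (h : ∀ a b, ω * (u a * v b) = ψ a * φ b) :
    ∃ c d : ℂ, ω * (c * d) = 1 ∧ u = c • ψ ∧ v = d • φ := by
  obtain ⟨a₀, ha₀⟩ := Function.ne_iff.1 hψ
  obtain ⟨b₀, hb₀⟩ := Function.ne_iff.1 hφ
  have h₀ := h a₀ b₀
  have h₀_ne : ω * (u a₀ * v b₀) ≠ 0 := h₀ ▸ mul_ne_zero ha₀ hb₀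
  have hω : ω ≠ 0 := left_ne_zero_of_mul h₀_ne
  have hu : u a₀ ≠ 0 := left_ne_zero_of_mul (right_ne_zero_of_mul h₀_ne)
  have hv : v b₀ ≠ 0 := right_ne_zero_of_mul (right_ne_zero_of_mul h₀_ne)
  refine ⟨φ b₀ / (ω * v b₀), ψ a₀ / (ω * u a₀), ?_, funext fun a => ?_, funext fun b => ?_⟩
  · field_simp
    linear_combination -h₀
  · have := h a b₀
    simp only [Pi.smul_apply, smul_eq_mul]
    field_simp
    linear_combination this
  · have := h a₀ b
    simp only [Pi.smul_apply, smul_eq_mul]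
    field_simp
    linear_combination this

section TensorState

variable {n m : ℕ}

theorem tensorMat_mulVec_tensorState (P : Matrix (Fin n → Fin 2) (Fin n → Fin 2) ℂ)
    (Q : Matrix (Fin m → Fin 2) (Fin m → Fin 2) ℂ) (ψ : (Fin n → Fin 2) → ℂ)
    (φ : (Fin m → Fin 2) → ℂ) :
    tensorMat P Q *ᵥ tensorState ψ φ = tensorState (P *ᵥ ψ) (Q *ᵥ φ) := by
  funext x
  rw [mulVec, dotProduct, ← (Equiv.sumArrowEquivProdArrow _ _ _).symm.sum_comp]
  simp only [Equiv.sumArrowEquivProdArrow, Equiv.coe_fn_symm_mk, Sum.elim_inl, Sum.elim_inr,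
    tensorMat, tensorState, of_apply, mulVec, dotProduct, Fintype.sum_prod_type,
    Finset.sum_mul_sum]
  exact Finset.sum_congr rfl fun a _ => Finset.sum_congr rfl fun b _ => by ring

theorem tensorMat_mem_stab_tensorState {ψ : (Fin n → Fin 2) → ℂ} {φ : (Fin m → Fin 2) → ℂ}
    {P : Matrix (Fin n → Fin 2) (Fin n → Fin 2) ℂ} {Q : Matrix (Fin m → Fin 2) (Fin m → Fin 2) ℂ}
    (hP : P ∈ Stab ψ) (hQ : Q ∈ Stab φ) : tensorMat P Q ∈ Stab (tensorState ψ φ) := by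
  obtain ⟨⟨ω, hω, b, c, rfl⟩, hPψ⟩ := hP
  obtain ⟨⟨ω', hω', b', c', rfl⟩, hQφ⟩ := hQ
  rw [mem_phases_iff_pow_four_eq_one] at hω hω'
  refine ⟨?_, by rw [tensorMat_mulVec_tensorState, hPψ, hQφ]⟩
  rw [tensorMat_smul_smul]
  convert smul_pauliString_mem_pauliGroup (ω := ω * ω') (by rw [mul_pow, hω, hω', one_mul])
    (Sum.elim b b') (Sum.elim c c') using 1
  rw [pauliString_sum_eq_tensorMat]
  rfl

theorem exists_tensorMat_eq_of_mem_stab_tensorState {ψ : (Fin n → Fin 2) → ℂ}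
    {φ : (Fin m → Fin 2) → ℂ} (hψ : ψ ≠ 0) (hφ : φ ≠ 0)
    {P : Matrix (Fin n ⊕ Fin m → Fin 2) (Fin n ⊕ Fin m → Fin 2) ℂ}
    (hP : P ∈ Stab (tensorState ψ φ)) :
    ∃ P₁ ∈ Stab ψ, ∃ P₂ ∈ Stab φ, tensorMat P₁ P₂ = P := by
  obtain ⟨⟨ω, -, b, c, rfl⟩, hPv⟩ := hP
  set S₁ := pauliString (fun i => b (.inl i)) (fun i => c (.inl i))
  set S₂ := pauliString (fun j => b (.inr j)) (fun j => c (.inr j))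
  have hS : ω • tensorState (S₁ *ᵥ ψ) (S₂ *ᵥ φ) = tensorState ψ φ := by
    rw [← tensorMat_mulVec_tensorState, ← smul_mulVec, ← pauliString_sum_eq_tensorMat]
    exact hPv
  obtain ⟨d₁, d₂, hd, h₁, h₂⟩ := exists_eq_smul_of_mul_outer_eq hψ hφ fun x y =>
    congrFun hS (Sum.elim x y)
  have hd₁ : d₁ ≠ 0 := left_ne_zero_of_mul (right_ne_zero_of_mul_eq_one hd)
  have hd₂ : d₂ ≠ 0 := right_ne_zero_of_mul (right_ne_zero_of_mul_eq_one hd)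
  have hd₁4 := pow_four_eq_one_of_pauliString_mulVec_eq_smul hψ h₁
  have hd₂4 := pow_four_eq_one_of_pauliString_mulVec_eq_smul hφ h₂
  refine ⟨d₁⁻¹ • S₁, ⟨smul_pauliString_mem_pauliGroup (by rw [inv_pow, hd₁4, inv_one]) _ _, ?_⟩,
    d₂⁻¹ • S₂, ⟨smul_pauliString_mem_pauliGroup (by rw [inv_pow, hd₂4, inv_one]) _ _, ?_⟩, ?_⟩
  · rw [smul_mulVec, h₁, smul_smul, inv_mul_cancel₀ hd₁, one_smul]
  · rw [smul_mulVec, h₂, smul_smul, inv_mul_cancel₀ hd₂, one_smul]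
  · rw [tensorMat_smul_smul, ← pauliString_sum_eq_tensorMat, ← mul_inv,
      inv_eq_of_mul_eq_one_right (a := d₁ * d₂) (b := ω) (by linear_combination hd)]

theorem bijOn_tensorMat_stab {ψ : (Fin n → Fin 2) → ℂ} {φ : (Fin m → Fin 2) → ℂ} (hψ : ψ ≠ 0)
    (hφ : φ ≠ 0) :
    Set.BijOn (fun p => tensorMat p.1 p.2) (Stab ψ ×ˢ Stab φ) (Stab (tensorState ψ φ)) := by
  refine ⟨fun p hp => tensorMat_mem_stab_tensorState hp.1 hp.2, ?_, fun P hP => ?_⟩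
  · rintro ⟨P₁, P₂⟩ ⟨hP₁, hP₂⟩ ⟨Q₁, Q₂⟩ ⟨hQ₁, hQ₂⟩ h
    exact Prod.ext (left_eq_of_tensorMat_eq hφ hP₂.2 hQ₂.2 h)
      (right_eq_of_tensorMat_eq hψ hP₁.2 hQ₁.2 h)
  · obtain ⟨P₁, hP₁, P₂, hP₂, rfl⟩ := exists_tensorMat_eq_of_mem_stab_tensorState hψ hφ hP
    exact ⟨(P₁, P₂), ⟨hP₁, hP₂⟩, rfl⟩

theorem ncard_stab_tensorState {ψ : (Fin n → Fin 2) → ℂ} {φ : (Fin m → Fin 2) → ℂ}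
    (hψ : ψ ≠ 0) (hφ : φ ≠ 0) :
    (Stab (tensorState ψ φ)).ncard = (Stab ψ).ncard * (Stab φ).ncard := by
  rw [← Set.ncard_prod]
  exact (bijOn_tensorMat_stab hψ hφ).ncard_eq.symm

end TensorState

theorem ne_zero_of_sum_norm_sq_eq_one {α : Type*} [Fintype α] {ψ : α → ℂ}
    (hψ : ∑ x, ‖ψ x‖ ^ 2 = 1) : ψ ≠ 0 := by
  rintro rfl
  simp at hψ

/-- Stabilizer nullity is additive under tensor products:
`|Stab(ψ ⊗ φ)| = |Stab ψ| ⋅ |Stab φ|`, hence `ν(ψ ⊗ φ) = ν(ψ) + ν(φ)`. -/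
theorem stmt12 (n m : ℕ) (ψ : (Fin n → Fin 2) → ℂ) (φ : (Fin m → Fin 2) → ℂ)
    (hψ : ∑ x, ‖ψ x‖ ^ 2 = 1) (hφ : ∑ x, ‖φ x‖ ^ 2 = 1) :
    (Stab (tensorState ψ φ)).ncard = (Stab ψ).ncard * (Stab φ).ncard ∧
    ((n + m : ℝ) - Real.logb 2 ((Stab (tensorState ψ φ)).ncard)) =
      ((n : ℝ) - Real.logb 2 ((Stab ψ).ncard)) +
      ((m : ℝ) - Real.logb 2 ((Stab φ).ncard)) := by
  have hcard := ncard_stab_tensorState (ne_zero_of_sum_norm_sq_eq_one hψ)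
    (ne_zero_of_sum_norm_sq_eq_one hφ)
  refine ⟨hcard, ?_⟩
  rw [hcard, Nat.cast_mul, Real.logb_mul (by exact_mod_cast (ncard_stab_pos ψ).ne')
    (by exact_mod_cast (ncard_stab_pos φ).ne')]
  ring
end
end

section
/- The CCZ resource state $\ket{\mathrm{CCZ}} = \mathrm{CCZ}\,\ket{+}^{\otimes 3}$ has trivial Pauli stabilizer group, i.e., $\mathrm{Stab}(\ket{\mathrm{CCZ}}) = \{I\}$ and hence $\nu(\ket{\mathrm{CCZ}}) = 3$. -/
/-!
Write `CCZstate x = s(x) / (2√2)` with `s(x) = (-1)^(x₀x₁x₂)`. Reading off the coefficient of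
`|x⟩`, the equation `ω • X^b Z^c |CCZ⟩ = |CCZ⟩` says `ω = s(x) (-1)^(c·(x+b)) s(x+b)` for every `x`.
For `b ≠ 0` the exponent `x₀x₁x₂ + (x+b)₀(x+b)₁(x+b)₂` is a quadratic function of `x` that is not
affine, so no character `(-1)^(c·x)` can make the right-hand side constant; for `b = 0` the
character itself must be constant, so `c = 0`, and then `ω = 1`.
-/

open Matrix Complex Kronecker

noncomputable section

/-- The CCZ resource state `CCZ|+⟩^{⊗3}`: amplitude `-1/(2√2)` on `|111⟩` and
`1/(2√2)` elsewhere. -/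
def CCZstate : (Fin 3 → Fin 2) → ℂ := fun x =>
  if x = fun _ => 1 then -((2 * Real.sqrt 2 : ℝ) : ℂ)⁻¹ else ((2 * Real.sqrt 2 : ℝ) : ℂ)⁻¹

lemma Xm_pow_mul_Zm_pow_apply (b c x y : Fin 2) :
    (Xm ^ (b : ℕ) * Zm ^ (c : ℕ)) x y = if y = x + b then (-1 : ℂ) ^ ((c : ℕ) * (y : ℕ)) else 0 := by
  fin_cases b <;> fin_cases c <;> fin_cases x <;> fin_cases y <;>
    simp [Xm, Zm, pow_succ, Matrix.mul_apply, Fin.sum_univ_two]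

section PauliString

variable {ι : Type} [Fintype ι]

/-- The eigenvalue `(-1)^(c·y)` of `Z^c` on the basis state `|y⟩`. -/
def zPhase (c y : ι → Fin 2) : ℤ := ∏ i, (-1) ^ ((c i : ℕ) * (y i : ℕ))

lemma zPhase_mul_self (c y : ι → Fin 2) : zPhase c y * zPhase c y = 1 := by
  rw [zPhase, ← Finset.prod_mul_distrib]
  exact Finset.prod_eq_one fun i _ => by rw [← pow_add]; exact Even.neg_one_pow ⟨_, rfl⟩

lemma pauliString_apply [DecidableEq ι] (b c x y : ι → Fin 2) :
    pauliString b c x y = if y = x + b then (zPhase c y : ℂ) else 0 := by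
  simp only [pauliString, zPhase, Matrix.of_apply, Xm_pow_mul_Zm_pow_apply]
  split_ifs with h
  · subst h
    push_cast
    exact Finset.prod_congr rfl fun i _ => if_pos rfl
  · obtain ⟨i, hi⟩ := Function.ne_iff.mp h
    exact Finset.prod_eq_zero (Finset.mem_univ i) (if_neg hi)

lemma pauliString_mulVec_apply [DecidableEq ι] (b c : ι → Fin 2) (f : (ι → Fin 2) → ℂ)
    (x : ι → Fin 2) :
    (pauliString b c *ᵥ f) x = zPhase c (x + b) * f (x + b) := by
  rw [mulVec, dotProduct, Finset.sum_eq_single (x + b)]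
  · rw [pauliString_apply, if_pos rfl]
  · intro y _ hy
    rw [pauliString_apply, if_neg hy, zero_mul]
  · exact fun h => absurd (Finset.mem_univ _) h

lemma pauliString_zero_zero [DecidableEq ι] : pauliString (0 : ι → Fin 2) 0 = 1 := by
  ext x y
  simp [pauliString_apply, zPhase, Matrix.one_apply, eq_comm]

lemma one_mem_Stab [DecidableEq ι] (ψ : (ι → Fin 2) → ℂ) : 1 ∈ Stab ψ :=
  ⟨⟨1, by simp, 0, 0, by rw [pauliString_zero_zero, one_smul]⟩, one_mulVec ψ⟩

end PauliString

def cczSign (x : Fin 3 → Fin 2) : ℤ := if x = fun _ => 1 then -1 else 1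

lemma cczSign_mul_self (x : Fin 3 → Fin 2) : cczSign x * cczSign x = 1 := by
  unfold cczSign; split_ifs <;> norm_num

lemma CCZstate_eq_cczSign_mul (x : Fin 3 → Fin 2) :
    CCZstate x = cczSign x * ((2 * Real.sqrt 2 : ℝ) : ℂ)⁻¹ := by
  unfold CCZstate cczSign
  split_ifs <;> push_cast <;> ring

/-- The phase `ω` that `ω • pauliString b c` must carry to fix the amplitude of `CCZstate` at `x`. -/
def cczStabPhase (b c x : Fin 3 → Fin 2) : ℤ := cczSign x * zPhase c (x + b) * cczSign (x + b)

lemma eq_zero_of_cczStabPhase_const : ∀ b c : Fin 3 → Fin 2,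
    (∀ x, cczStabPhase b c x = cczStabPhase b c 0) → b = 0 ∧ c = 0 := by
  decide

lemma eq_of_smul_pauliString_mulVec_CCZstate {ω : ℂ} {b c : Fin 3 → Fin 2}
    (h : (ω • pauliString b c) *ᵥ CCZstate = CCZstate) (x : Fin 3 → Fin 2) :
    ω = cczStabPhase b c x := by
  have hx := congrFun h x
  rw [smul_mulVec, Pi.smul_apply, pauliString_mulVec_apply, smul_eq_mul,
    CCZstate_eq_cczSign_mul, CCZstate_eq_cczSign_mul] at hx
  have hα : ((2 * Real.sqrt 2 : ℝ) : ℂ)⁻¹ ≠ 0 :=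
    inv_ne_zero (Complex.ofReal_ne_zero.mpr (by positivity))
  have hc : ω * (zPhase c (x + b) * cczSign (x + b) : ℤ) = cczSign x := by
    apply mul_right_cancel₀ hα
    rw [Int.cast_mul]
    linear_combination hx
  have hu : ((zPhase c (x + b) * cczSign (x + b) : ℤ) : ℂ) ^ 2 = 1 := by
    rw [sq, ← Int.cast_mul, mul_mul_mul_comm, zPhase_mul_self, cczSign_mul_self]; norm_num
  rw [cczStabPhase]
  push_cast at hc hu ⊢
  linear_combination (zPhase c (x + b) * cczSign (x + b) : ℂ) * hc - ω * hu

theorem Stab_CCZstate : Stab CCZstate = {1} := by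
  refine Set.eq_singleton_iff_unique_mem.mpr ⟨one_mem_Stab _, ?_⟩
  rintro _ ⟨⟨ω, -, b, c, rfl⟩, hP⟩
  have hω := eq_of_smul_pauliString_mulVec_CCZstate hP
  obtain ⟨rfl, rfl⟩ := eq_zero_of_cczStabPhase_const b c fun x =>
    Int.cast_injective ((hω x).symm.trans (hω 0))
  have h1 : ω = 1 := by
    rw [hω 0, show cczStabPhase 0 0 0 = 1 by decide, Int.cast_one]
  rw [h1, one_smul, pauliString_zero_zero]

/-- `|CCZ⟩` has trivial Pauli stabilizer group, hence nullity 3. -/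
theorem stmt16 :
    Stab CCZstate = {1} ∧ (3 : ℝ) - Real.logb 2 ((Stab CCZstate).ncard) = 3 := by
  refine ⟨Stab_CCZstate, ?_⟩
  rw [Stab_CCZstate, Set.ncard_singleton]
  simp

end
end
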